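/- Let K be a field of characteristic p and let L ⊆ K be a subfield containing 𝔽q. Let θ, κ₁, …, κ_r ∈ L (r ≥ 1) and F ∈ L[t]. If g ∈ K[t] satisfies (t − θ)·g + F = κ_r·g^{(r)} + κ_{r−1}·g^{(r−1)} + ⋯ + κ₁·g^{(1)} in K[t] (where F, θ, κ_j are viewed in K[t] via the inclusion L ⊆ K), then every coefficient of g lies in L. -/
import Mathlib


/-- The `j`-th Frobenius twist of a polynomial: raise each coefficient to the
`q^j`-th power. -/
noncomputable def frobTwist {L : Type*} [Semiring L] (q j : ℕ) (g : Polynomial L) :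
    Polynomial L :=
  g.sum fun n c => Polynomial.monomial n (c ^ q ^ j)

lemma coeff_frobTwist {L : Type*} [Semiring L] (q j : ℕ) (hq : q ^ j ≠ 0)
    (g : Polynomial L) (n : ℕ) : (frobTwist q j g).coeff n = g.coeff n ^ q ^ j := by
  unfold frobTwist
  rw [Polynomial.coeff_sum]
  unfold Polynomial.sum
  simp only [Polynomial.coeff_monomial]
  rw [Finset.sum_ite_eq' g.support n (fun n => g.coeff n ^ q ^ j)]
  by_cases h : n ∈ g.support
  · simp [h]
  · simp only [h, if_false]
    rw [Polynomial.notMem_support_iff.mp h, zero_pow hq]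

/-- Descent claim from the proof of Lemma 3.1 of the paper. Let `K` be a field
of characteristic `p` and `L ⊆ K` a subfield containing `𝔽q`. If the data
`θ, κ₁, …, κ_r` and the coefficients of `F` lie in `L`, then any solution
`g ∈ K[t]` of the Frobenius difference equation
`(t − θ)g + F = κ_r g^{(r)} + ⋯ + κ₁ g^{(1)}` has all of its coefficients
in `L`. -/
theorem difference_equation_coefficients_descend
    (p : ℕ) [Fact p.Prime] (e q : ℕ) (he : 0 < e) (hq : q = p ^ e)
    (Fq : Type*) [Field Fq] [Fintype Fq] (hcard : Fintype.card Fq = q)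
    (K : Type*) [Field K] [CharP K p] (L : Subfield K)
    (ι : Fq →+* K) (hι : ∀ c, ι c ∈ L)
    (θ : K) (hθ : θ ∈ L)
    (r : ℕ) (hr : 1 ≤ r) (κ : ℕ → K) (hκL : ∀ j, κ j ∈ L)
    (F : Polynomial K) (hFL : ∀ n, F.coeff n ∈ L)
    (g : Polynomial K)
    (hg : (Polynomial.X - Polynomial.C θ) * g + F =
      ∑ j ∈ Finset.Icc 1 r, Polynomial.C (κ j) * frobTwist q j g) :
    ∀ n, g.coeff n ∈ L := by
  have hp : 0 < p := (Fact.out : p.Prime).pos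
  have hq0 : ∀ j : ℕ, q ^ j ≠ 0 := fun j => pow_ne_zero _ (by rw [hq]; exact pow_ne_zero _ hp.ne')
  -- key coefficient identity
  have key : ∀ m : ℕ, g.coeff m =
      (∑ j ∈ Finset.Icc 1 r, κ j * g.coeff (m + 1) ^ q ^ j)
        - F.coeff (m + 1) + θ * g.coeff (m + 1) := by
    intro m
    have := congrArg (fun P : Polynomial K => P.coeff (m + 1)) hg
    simp only [Polynomial.coeff_add, Polynomial.finset_sum_coeff,
      Polynomial.coeff_C_mul] at this
    rw [mul_comm (Polynomial.X - Polynomial.C θ) g,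
      Polynomial.coeff_mul_X_sub_C] at this
    simp only [coeff_frobTwist q _ (hq0 _)] at this
    linear_combination this
  -- downward induction
  have main : ∀ k n : ℕ, g.natDegree < n + k → g.coeff n ∈ L := by
    intro k
    induction k with
    | zero =>
      intro n hn
      rw [Polynomial.coeff_eq_zero_of_natDegree_lt (by omega)]
      exact zero_mem L
    | succ k ih =>
      intro n hn
      have hnext : g.coeff (n + 1) ∈ L := ih (n + 1) (by omega)
      rw [key n]
      exact add_mem (sub_mem (sum_mem fun j _ =>
        mul_mem (hκL j) (pow_mem hnext _)) (hFL _)) (mul_mem hθ hnext)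
  intro n
  exact main (g.natDegree + 1) n (by omega)
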